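/- Information gain inequality: let X be an ℝ^p-valued random vector, Z an ℝ^r-valued random vector, and Y = (Y_1,…,Y_q) an ℝ^q-valued random vector with non-degenerate components, all defined on a common probability space. Then T(Y|X) ≤ T(Y|(X,Z)). -/

import Mathlib

open MeasureTheory ProbabilityTheory

/-- Azadkia–Chatterjee's rank correlation `ξ(Y | m)` of a real random variable `Y`
given a sub-σ-algebra `m`. -/
noncomputable def xiSigma {Ω : Type*} (m : MeasurableSpace Ω) [MeasurableSpace Ω]
    (P : Measure Ω) (Y : Ω → ℝ) : ℝ :=
  (∫ y, variance (P[Set.indicator {ω | y ≤ Y ω} (fun _ => (1 : ℝ)) | m]) P ∂(P.map Y)) /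
  (∫ y, variance (Set.indicator {ω | y ≤ Y ω} (fun _ => (1 : ℝ))) P ∂(P.map Y))

/-- Azadkia–Chatterjee's rank correlation `ξ(Y | X)`: conditioning on the σ-algebra
generated by the random vector `X`. -/
noncomputable def xi {Ω α : Type*} [MeasurableSpace Ω] [MeasurableSpace α]
    (P : Measure Ω) (Y : Ω → ℝ) (X : Ω → α) : ℝ :=
  xiSigma (MeasurableSpace.comap X inferInstance) P Y

/-- The σ-algebra generated by the response variables with index `< i`,
i.e. by `(Y_1, …, Y_{i-1})`; for `i = 0` it is the trivial σ-algebra `⊥`,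
so that `xiSigma (sigmaPast Y 0) P (Y 0) = ξ(Y_1 | ∅) = 0`. -/
def sigmaPast {Ω : Type*} {q : ℕ} (Y : Fin q → Ω → ℝ) (i : Fin q) :
    MeasurableSpace Ω :=
  ⨆ j : Fin q, ⨆ _ : j < i, MeasurableSpace.comap (Y j) inferInstance

/-- The extension `T(Y | X)` of Azadkia–Chatterjee's rank correlation to a vector
`Y = (Y_1, …, Y_q)` of response variables, given the predictor vector `X`:
`T(Y|X) = 1 − (q − ∑_i ξ(Y_i | (X,Y_{i−1},…,Y_1))) / (q − ∑_i ξ(Y_i | (Y_{i−1},…,Y_1)))`. -/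
noncomputable def T {Ω α : Type*} [MeasurableSpace Ω] [MeasurableSpace α]
    (P : Measure Ω) {q : ℕ} (Y : Fin q → Ω → ℝ) (X : Ω → α) : ℝ :=
  1 - ((q : ℝ) - ∑ i, xiSigma (MeasurableSpace.comap X inferInstance ⊔ sigmaPast Y i) P (Y i)) /
      ((q : ℝ) - ∑ i, xiSigma (sigmaPast Y i) P (Y i))

/-- A real random variable is non-degenerate if it is not almost surely constant. -/
def Nondegenerate {Ω : Type*} [MeasurableSpace Ω] (P : Measure Ω) (Y : Ω → ℝ) : Prop :=
  ¬ ∃ c : ℝ, ∀ᵐ ω ∂P, Y ω = c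

/-!
Conditioning on a finer σ-algebra can only increase `Var(P(Y ≥ y | m))`: by the tower property
`P(Y ≥ y | m₁)` is the conditional expectation of `P(Y ≥ y | m₂)` given `m₁ ≤ m₂`, and the law of
total variance says conditional expectation does not increase variance. Hence `ξ(Y_i | ·)` is
monotone in the conditioning σ-algebra, and at most its value `a / a ≤ 1` for the full σ-algebra.
Adding `Z` to `X` enlarges every σ-algebra `σ(X, Y_{<i})`, which lowers the numerator
`q − ∑ ξ(Y_i | (X, Y_{<i}))` of `T`, while its denominator is nonnegative and does not involve
the predictor.
-/

section Variance

variable {Ω : Type*} {m m₁ m₂ : MeasurableSpace Ω} [mΩ : MeasurableSpace Ω] {μ : Measure Ω}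
  [IsProbabilityMeasure μ] {X : Ω → ℝ}

lemma variance_condExp_le (hm : m ≤ mΩ) (hX : MemLp X 2 μ) : Var[μ[X | m]; μ] ≤ Var[X; μ] := by
  rw [← integral_condVar_add_variance_condExp hm hX]
  exact le_add_of_nonneg_left <| integral_nonneg_of_ae <|
    condExp_nonneg <| ae_of_all _ fun ω => sq_nonneg _

lemma variance_condExp_mono (h : m₁ ≤ m₂) (hm₂ : m₂ ≤ mΩ) (hX : MemLp X 2 μ) :
    Var[μ[X | m₁]; μ] ≤ Var[μ[X | m₂]; μ] :=
  calc Var[μ[X | m₁]; μ] = Var[μ[μ[X | m₂] | m₁]; μ] :=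
        variance_congr (condExp_condExp_of_le h hm₂).symm
    _ ≤ Var[μ[X | m₂]; μ] := variance_condExp_le (h.trans hm₂) (hX.condExp one_le_two)

lemma antitone_integral_sq_condExp {ι : Type*} [Preorder ι] {f : ι → Ω → ℝ} (hf : Antitone f)
    (hf₀ : ∀ i, 0 ≤ f i) (hf₂ : ∀ i, MemLp (f i) 2 μ) :
    Antitone fun i => ∫ ω, (μ[f i | m] ω) ^ 2 ∂μ := by
  intro i j hij
  refine integral_mono_ae ((hf₂ j).condExp one_le_two).integrable_sq
    ((hf₂ i).condExp one_le_two).integrable_sq ?_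
  filter_upwards [condExp_mono (m := m) ((hf₂ j).integrable one_le_two)
    ((hf₂ i).integrable one_le_two) (ae_of_all _ (hf hij)),
    condExp_nonneg (m := m) (ae_of_all μ (hf₀ j))] with ω hle h₀
  exact pow_le_pow_left₀ h₀ hle 2

lemma measurable_variance_condExp {f : ℝ → Ω → ℝ} (hm : m ≤ mΩ) (hf : Antitone f)
    (hf₀ : ∀ y, 0 ≤ f y) (hf₂ : ∀ y, MemLp (f y) 2 μ) :
    Measurable fun y => Var[μ[f y | m]; μ] := by
  have hvar : ∀ y, Var[μ[f y | m]; μ] = ∫ ω, (μ[f y | m] ω) ^ 2 ∂μ - (∫ ω, f y ω ∂μ) ^ 2 :=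
    fun y => by rw [variance_eq_sub ((hf₂ y).condExp one_le_two), integral_condExp hm]; rfl
  have hmean : Antitone fun y => ∫ ω, f y ω ∂μ := fun y y' h =>
    integral_mono ((hf₂ y').integrable one_le_two) ((hf₂ y).integrable one_le_two) (hf h)
  simp_rw [hvar]
  exact (antitone_integral_sq_condExp hf hf₀ hf₂).measurable.sub (hmean.measurable.pow_const 2)

end Variance

section UpperIndicator

variable {Ω : Type*} {Y : Ω → ℝ}

noncomputable def upperIndicator (Y : Ω → ℝ) (y : ℝ) : Ω → ℝ :=
  Set.indicator {ω | y ≤ Y ω} fun _ => 1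

lemma antitone_upperIndicator : Antitone (upperIndicator Y) := fun _ _ h =>
  Set.indicator_le_indicator_of_subset (fun _ hω => h.trans hω) fun _ => zero_le_one

lemma upperIndicator_nonneg (y : ℝ) : 0 ≤ upperIndicator Y y :=
  Set.indicator_nonneg fun _ _ => zero_le_one

lemma upperIndicator_mem_Icc (y : ℝ) (ω : Ω) : upperIndicator Y y ω ∈ Set.Icc 0 1 :=
  ⟨upperIndicator_nonneg y ω, Set.indicator_apply_le' (fun _ => le_rfl) fun _ => zero_le_one⟩

end UpperIndicator

lemma xiSigma_eq {Ω : Type*} {m : MeasurableSpace Ω} [MeasurableSpace Ω] {P : Measure Ω}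
    {Y : Ω → ℝ} : xiSigma m P Y = (∫ y, Var[P[upperIndicator Y y | m]; P] ∂P.map Y) /
      ∫ y, Var[upperIndicator Y y; P] ∂P.map Y :=
  rfl

section Xi

variable {Ω : Type*} {m m₁ m₂ : MeasurableSpace Ω} [mΩ : MeasurableSpace Ω] {P : Measure Ω}
  [IsProbabilityMeasure P] {Y : Ω → ℝ}

lemma measurable_upperIndicator (hY : Measurable Y) (y : ℝ) :
    Measurable (upperIndicator Y y) :=
  measurable_const.indicator (measurableSet_le measurable_const hY)

lemma memLp_upperIndicator (hY : Measurable Y) (y : ℝ) : MemLp (upperIndicator Y y) 2 P :=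
  memLp_of_bounded (ae_of_all _ (upperIndicator_mem_Icc y))
    (measurable_upperIndicator hY y).aestronglyMeasurable 2

lemma integrable_variance_condExp_upperIndicator (hY : Measurable Y) (hm : m ≤ mΩ)
    (ν : Measure ℝ) [IsFiniteMeasure ν] :
    Integrable (fun y => Var[P[upperIndicator Y y | m]; P]) ν := by
  refine .of_bound (measurable_variance_condExp hm antitone_upperIndicator upperIndicator_nonneg
    (memLp_upperIndicator hY)).aestronglyMeasurable (((1 - 0) / 2) ^ 2) (ae_of_all _ fun y => ?_)
  rw [Real.norm_of_nonneg (variance_nonneg _ _)]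
  exact (variance_condExp_le hm (memLp_upperIndicator hY y)).trans <| variance_le_sq_of_bounded
    (ae_of_all _ (upperIndicator_mem_Icc y))
    (measurable_upperIndicator hY y).aemeasurable

lemma xiSigma_mono (hY : Measurable Y) (h : m₁ ≤ m₂) (hm₂ : m₂ ≤ mΩ) :
    xiSigma m₁ P Y ≤ xiSigma m₂ P Y := by
  rw [xiSigma_eq, xiSigma_eq]
  refine div_le_div_of_nonneg_right ?_ (integral_nonneg fun _ => variance_nonneg _ _)
  exact integral_mono (integrable_variance_condExp_upperIndicator hY (h.trans hm₂) _)
    (integrable_variance_condExp_upperIndicator hY hm₂ _)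
    fun y => variance_condExp_mono h hm₂ (memLp_upperIndicator hY y)

lemma xiSigma_self_le_one (hY : Measurable Y) : xiSigma mΩ P Y ≤ 1 := by
  have hself : ∀ y, P[upperIndicator Y y | mΩ] = upperIndicator Y y := fun y =>
    condExp_of_stronglyMeasurable le_rfl (measurable_upperIndicator hY y).stronglyMeasurable
      ((memLp_upperIndicator hY y).integrable one_le_two)
  rw [xiSigma_eq]
  simp only [hself]
  exact div_self_le_one _

lemma xiSigma_le_one (hY : Measurable Y) (hm : m ≤ mΩ) : xiSigma m P Y ≤ 1 :=
  (xiSigma_mono hY hm le_rfl).trans (xiSigma_self_le_one hY)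

end Xi

lemma sigmaPast_le {Ω : Type*} [mΩ : MeasurableSpace Ω] {q : ℕ} {Y : Fin q → Ω → ℝ}
    (hY : ∀ i, Measurable (Y i)) (i : Fin q) : sigmaPast Y i ≤ mΩ :=
  iSup₂_le fun j _ => (hY j).comap_le

lemma T_le_of_comap_le {Ω α β : Type*} [MeasurableSpace Ω] [MeasurableSpace α]
    [MeasurableSpace β] {P : Measure Ω} [IsProbabilityMeasure P] {q : ℕ} {Y : Fin q → Ω → ℝ}
    {X : Ω → α} {X' : Ω → β} (hY : ∀ i, Measurable (Y i)) (hX' : Measurable X')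
    (h : MeasurableSpace.comap X inferInstance ≤ MeasurableSpace.comap X' inferInstance) :
    T P Y X ≤ T P Y X' := by
  refine sub_le_sub_left (div_le_div_of_nonneg_right ?_ ?_) 1
  · exact sub_le_sub_left (Finset.sum_le_sum fun i _ => xiSigma_mono (hY i)
      (sup_le_sup_right h _) (sup_le hX'.comap_le (sigmaPast_le hY i))) _
  · refine sub_nonneg.2 <| (Finset.sum_le_sum fun i _ =>
      xiSigma_le_one (hY i) (sigmaPast_le hY i)).trans ?_
    simp

theorem T_information_gain_inequality_general
    {Ω : Type*} [MeasurableSpace Ω] (P : Measure Ω) [IsProbabilityMeasure P]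
    {p q r : ℕ} (X : Ω → (Fin p → ℝ)) (Z : Ω → (Fin r → ℝ)) (Y : Fin q → Ω → ℝ)
    (hX : Measurable X) (hZ : Measurable Z) (hY : ∀ i, Measurable (Y i)) :
    T P Y X ≤ T P Y (fun ω => (X ω, Z ω)) :=
  T_le_of_comap_le hY (hX.prodMk hZ) (comap_measurable fun ω => (X ω, Z ω)).fst.comap_le

theorem T_information_gain_inequality
    {Ω : Type*} [MeasurableSpace Ω] (P : Measure Ω) [IsProbabilityMeasure P]
    {p q r : ℕ} (X : Ω → (Fin p → ℝ)) (Z : Ω → (Fin r → ℝ)) (Y : Fin q → Ω → ℝ)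
    (hX : Measurable X) (hZ : Measurable Z) (hY : ∀ i, Measurable (Y i))
    (hnd : ∀ i, Nondegenerate P (Y i)) :
    T P Y X ≤ T P Y (fun ω => (X ω, Z ω)) :=
  T_information_gain_inequality_general P X Z Y hX hZ hY
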